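/- arXiv:math/0403329 — 3 statements merged into one kernel-verified Lean document; each statement's English description precedes it below -/
import Mathlib

section
/- Let G be a compact connected Hausdorff topological group with identity element e, let X be a connected Hausdorff topological space, and let p : X → G be a k-sheeted covering map for some positive integer k. Then for every point ẽ ∈ p⁻¹(e) there exists a group structure on X with identity element ẽ such that X, with its given topology, is a topological group (multiplication and inversion are continuous) and p : X → G is a group homomorphism (hence a continuous surjective homomorphism of compact groups). -/
/-!
Since `G` need not be locally path connected, lifts are not built along paths. By compactness of
`X` there is a neighbourhood `N` of `1` such that, for `g ∈ N`, left translation by `g` lifts to a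
map moving every point only slightly, jointly continuous in `g`. Composing with these small lifts
shows that the set of `x` for which left translation by `p x` lifts to a map sending `e'` to `x`
is clopen, hence all of `X`. These lifts define a multiplication, continuous because near `x₀` the
lift for `x` is a small lift composed with the one for `x₀`. Uniqueness of lifts gives the monoid
laws. Right multiplications by distinct points of a fibre are distinct lifts, so left
multiplication by a point over `1` permutes the finite fibre over `1`, which yields inverses.
Inversion is continuous because `X` is compact Hausdorff.
-/

/-- A `k`-sheeted covering map: a continuous surjection such that every point of the base
has an open neighborhood `W` whose preimage is partitioned into `k` disjoint open sets,
each mapped homeomorphically onto `W` by `p`. -/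
def IsCoveringOfDegree {X Y : Type*} [TopologicalSpace X] [TopologicalSpace Y]
    (k : ℕ) (p : X → Y) : Prop :=
  Continuous p ∧ Function.Surjective p ∧
    ∀ y : Y, ∃ W : Set Y, IsOpen W ∧ y ∈ W ∧
      ∃ V : Fin k → Set X,
        (∀ i, IsOpen (V i)) ∧
        (Pairwise fun i j => Disjoint (V i) (V j)) ∧
        (⋃ i, V i) = p ⁻¹' W ∧
        ∀ i, ∃ e : (V i) ≃ₜ W, ∀ x : (V i), p x = e x

open Set Filter Topology Function UniformSpace
open scoped Uniformity

namespace IsCoveringOfDegree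

variable {E B : Type*} [TopologicalSpace E] [TopologicalSpace B] {k : ℕ} {p : E → B}

theorem isLocalHomeomorph (hp : IsCoveringOfDegree k p) : IsLocalHomeomorph p := by
  refine isLocalHomeomorph_iff_isOpenEmbedding_restrict.mpr fun x => ?_
  obtain ⟨W, hWo, hxW, V, hVo, -, hVW, hVe⟩ := hp.2.2 (p x)
  obtain ⟨i, hxi⟩ := mem_iUnion.mp (hVW ▸ hxW : x ∈ ⋃ i, V i)
  obtain ⟨φ, hφ⟩ := hVe i
  have hpφ : (V i).domRestrict p = Subtype.val ∘ φ := funext hφ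
  exact ⟨V i, (hVo i).mem_nhds hxi, hpφ ▸ hWo.isOpenEmbedding_subtypeVal.comp φ.isOpenEmbedding⟩

theorem exists_mem_nhds_isCompact_preimage [LocallyCompactSpace B] (hp : IsCoveringOfDegree k p)
    (y : B) : ∃ K ∈ 𝓝 y, IsCompact (p ⁻¹' K) := by
  obtain ⟨W, hWo, hyW, V, -, -, hVW, hVe⟩ := hp.2.2 y
  choose φ hφ using hVe
  obtain ⟨K, hKy, hKW, hK⟩ := local_compact_nhds (hWo.mem_nhds hyW)
  have hKW' : IsCompact (Subtype.val ⁻¹' K : Set W) := by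
    rwa [Subtype.isCompact_iff, Subtype.image_preimage_coe, inter_eq_right.mpr hKW]
  have hpK : p ⁻¹' K = ⋃ i, Subtype.val '' (φ i ⁻¹' (Subtype.val ⁻¹' K)) := by
    ext x
    simp only [mem_preimage, mem_iUnion, mem_image, Subtype.exists, exists_and_right,
      exists_eq_right]
    refine ⟨fun hx => ?_, fun ⟨i, hxi, hx⟩ => hφ i ⟨x, hxi⟩ ▸ hx⟩
    obtain ⟨i, hxi⟩ := mem_iUnion.mp (hVW ▸ hKW hx : x ∈ ⋃ i, V i)
    exact ⟨i, hxi, hφ i ⟨x, hxi⟩ ▸ hx⟩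
  exact ⟨K, hKy, hpK ▸ isCompact_iUnion fun i =>
    ((φ i).isCompact_preimage.mpr hKW').image continuous_subtype_val⟩

theorem compactSpace [CompactSpace B] [LocallyCompactSpace B] (hp : IsCoveringOfDegree k p) :
    CompactSpace E := by
  choose K hK hKc using hp.exists_mem_nhds_isCompact_preimage
  obtain ⟨t, ht⟩ := finite_cover_nhds hK
  refine ⟨?_⟩
  simpa [← preimage_iUnion₂, ht] using t.isCompact_biUnion fun y _ => hKc y

end IsCoveringOfDegree

theorem IsCoveringMap.finite_preimage_singleton {E B : Type*} [TopologicalSpace E]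
    [TopologicalSpace B] [CompactSpace E] [T1Space B] {p : E → B} (hp : IsCoveringMap p) (y : B) :
    (p ⁻¹' {y}).Finite :=
  (isClosed_singleton.preimage hp.continuous).isCompact.finite ⟨(hp y).1⟩

theorem IsLocallyInjective.exists_mem_nhdsSet_diagonal_injOn_ball {E B : Type*}
    [TopologicalSpace E] [CompactSpace E] [R1Space E] {p : E → B} (hp : IsLocallyInjective p) :
    ∃ U ∈ 𝓝ˢ (diagonal E), ∀ y, (ball y U).InjOn p := by
  -- the neighbourhoods of the diagonal of a compact R₁ space form its unique uniformity
  let _ := uniformSpaceOfCompactR1 (γ := E)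
  have hR : {q : E × E | p q.1 = p q.2 → q.1 = q.2} ∈ 𝓤 E := by
    rw [← nhdsSet_diagonal_eq_uniformity, mem_nhdsSet_iff_forall]
    rintro ⟨x, _⟩ (rfl : x = _)
    obtain ⟨V, hVo, hxV, hinj⟩ := hp x
    exact mem_of_superset (prod_mem_nhds (hVo.mem_nhds hxV) (hVo.mem_nhds hxV))
      fun q hq hpq => hinj hq.1 hq.2 hpq
  obtain ⟨U, hU, hUsymm, hUR⟩ := comp_symm_mem_uniformity_sets hR
  refine ⟨U, nhdsSet_diagonal_eq_uniformity (α := E) ▸ hU, fun y z hz z' hz' hpz => ?_⟩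
  exact hUR (SetRel.prodMk_mem_comp (mem_ball_symmetry.mp hz) hz') hpz

section TranslationLift

variable {E G : Type*} [Group G] {p : E → G}

open Classical in
noncomputable def closeLift (p : E → G) (U : Set (E × E)) (g : G) (y : E) : E :=
  if h : ∃ z ∈ ball y U, p z = g * p y then h.choose else y

theorem closeLift_eq {U : Set (E × E)} (hU : ∀ y, (ball y U).InjOn p) {g : G} {y z : E}
    (hz : z ∈ ball y U) (hpz : p z = g * p y) : closeLift p U g y = z := by
  have h : ∃ z ∈ ball y U, p z = g * p y := ⟨z, hz, hpz⟩
  rw [closeLift, dif_pos h]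
  exact hU y h.choose_spec.1 hz (h.choose_spec.2.trans hpz.symm)

variable [TopologicalSpace E] [TopologicalSpace G]

theorem eventually_closeLift [ContinuousMul G] (hp : IsLocalHomeomorph p) {U : Set (E × E)}
    (hU : ∀ y, (ball y U).InjOn p) {y₀ : E} (hUy₀ : U ∈ 𝓝 (y₀, y₀)) :
    ∀ᶠ q : G × E in 𝓝 (1, y₀), closeLift p U q.1 q.2 ∈ ball q.2 U ∧
      p (closeLift p U q.1 q.2) = q.1 * p q.2 ∧ ContinuousAt (uncurry (closeLift p U)) q := by
  obtain ⟨φ, hy₀, hpφ⟩ := hp y₀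
  set h : G × E → G := fun q => q.1 * p q.2
  have hh : Continuous h := continuous_fst.mul (hp.continuous.comp continuous_snd)
  have hh₀ : h (1, y₀) ∈ φ.target := by simpa [h, hpφ] using φ.map_source hy₀
  have hψ₀ : φ.symm (h (1, y₀)) = y₀ := by simpa [h, hpφ] using φ.left_inv hy₀
  have hsec : ∀ b ∈ φ.target, p (φ.symm b) = b := fun b hb => by rw [hpφ]; exact φ.right_inv hb
  -- on this neighbourhood `closeLift p U` is the local section `φ.symm ∘ h`
  have hT : ∀ᶠ q in 𝓝 (1, y₀), h q ∈ φ.target ∧ φ.symm (h q) ∈ ball q.2 U := by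
    refine (hh.continuousAt.eventually_mem (φ.open_target.mem_nhds hh₀)).and ?_
    have : Tendsto (fun q => (q.2, φ.symm (h q))) (𝓝 (1, y₀)) (𝓝 (y₀, y₀)) := by
      refine (continuous_snd.continuousAt.prodMk ?_ : ContinuousAt _ _).tendsto.trans ?_
      · exact (φ.continuousAt_symm hh₀).comp hh.continuousAt
      · rw [hψ₀]
    exact this.eventually_mem hUy₀
  filter_upwards [hT.eventually_nhds] with q hq
  have heq : (fun q' : G × E => φ.symm (h q')) =ᶠ[𝓝 q] uncurry (closeLift p U) :=
    hq.mono fun q' hq' => (closeLift_eq hU hq'.2 (hsec _ hq'.1)).symm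
  obtain ⟨hq₁, hq₂⟩ := hq.self_of_nhds
  have hcl : closeLift p U q.1 q.2 = φ.symm (h q) := heq.self_of_nhds.symm
  exact ⟨hcl ▸ hq₂, hcl ▸ hsec _ hq₁, ((φ.continuousAt_symm hq₁).comp hh.continuousAt).congr heq⟩

structure IsLocalTranslationLift (p : E → G) (N : Set G) (Φ : G → E → E) : Prop where
  lift : ∀ g ∈ N, ∀ y, p (Φ g y) = g * p y
  continuousAt : ∀ g ∈ N, ∀ y, ContinuousAt (uncurry Φ) (g, y)
  eventually_to : ∀ x, ∀ᶠ x' in 𝓝 x, p x' * (p x)⁻¹ ∈ N ∧ Φ (p x' * (p x)⁻¹) x = x'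
  eventually_from : ∀ x, ∀ᶠ x' in 𝓝 x, p x * (p x')⁻¹ ∈ N ∧ Φ (p x * (p x')⁻¹) x' = x

theorem exists_isLocalTranslationLift [IsTopologicalGroup G] [CompactSpace E] [R1Space E]
    (hp : IsLocalHomeomorph p) : ∃ N Φ, IsLocalTranslationLift p N Φ := by
  obtain ⟨U, hUΔ, hU⟩ := hp.isLocallyInjective.exists_mem_nhdsSet_diagonal_injOn_ball
  have hUy : ∀ y, U ∈ 𝓝 (y, y) := fun y => mem_nhdsSet_iff_forall.mp hUΔ (y, y) rfl
  obtain ⟨N, hN, hNlift⟩ := (isCompact_univ.eventually_forall_of_forall_eventually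
    (P := fun g y => closeLift p U g y ∈ ball y U ∧ p (closeLift p U g y) = g * p y ∧
      ContinuousAt (uncurry (closeLift p U)) (g, y))
    fun y _ => eventually_closeLift hp hU (hUy y)).exists_mem
  have hpc := hp.continuous
  refine ⟨N, closeLift p U, fun g hg y => (hNlift g hg y trivial).2.1,
    fun g hg y => (hNlift g hg y trivial).2.2, fun x => ?_, fun x => ?_⟩
  · have h₁ : Tendsto (fun x' => p x' * (p x)⁻¹) (𝓝 x) (𝓝 1) := by
      rw [← mul_inv_cancel (p x)]
      exact (hpc.mul continuous_const).tendsto x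
    have h₂ : Tendsto (fun x' => (x, x')) (𝓝 x) (𝓝 (x, x)) :=
      (continuous_const.prodMk continuous_id).tendsto x
    filter_upwards [h₁ hN, h₂ (hUy x)] with x' hg hx'
    exact ⟨hg, closeLift_eq hU hx' (inv_mul_cancel_right _ _).symm⟩
  · have h₁ : Tendsto (fun x' => p x * (p x')⁻¹) (𝓝 x) (𝓝 1) := by
      rw [← mul_inv_cancel (p x)]
      exact (continuous_const.mul hpc.inv).tendsto x
    have h₂ : Tendsto (fun x' => (x', x)) (𝓝 x) (𝓝 (x, x)) :=
      (continuous_id.prodMk continuous_const).tendsto x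
    filter_upwards [h₁ hN, h₂ (hUy x)] with x' hg hx'
    exact ⟨hg, closeLift_eq hU hx' (inv_mul_cancel_right _ _).symm⟩

end TranslationLift

section LeftMulLift

variable {E G : Type*} [TopologicalSpace E] [Group G] {p : E → G} {e : E}

structure IsLeftMulLift (p : E → G) (e x : E) (l : E → E) : Prop where
  continuous : Continuous l
  lift : ∀ y, p (l y) = p x * p y
  map_base : l e = x

theorem isLeftMulLift_id (he : p e = 1) : IsLeftMulLift p e e id :=
  ⟨continuous_id, fun y => by rw [he, one_mul, id_eq], rfl⟩

namespace IsLeftMulLift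

variable {x x' : E} {l l' : E → E}

theorem comp (hl : IsLeftMulLift p e x l) (hl' : IsLeftMulLift p e x' l') :
    IsLeftMulLift p e (l x') (l ∘ l') :=
  ⟨hl.continuous.comp hl'.continuous,
    fun y => by rw [comp_apply, hl.lift, hl'.lift, hl.lift, mul_assoc],
    by rw [comp_apply, hl'.map_base]⟩

variable [TopologicalSpace G]

theorem unique [ConnectedSpace E] (hp : IsCoveringMap p) (hl : IsLeftMulLift p e x l)
    (hl' : IsLeftMulLift p e x l') : l = l' :=
  hp.eq_of_comp_eq hl.continuous hl'.continuous (funext fun y => by simp [hl.lift, hl'.lift]) e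
    (hl.map_base.trans hl'.map_base.symm)

end IsLeftMulLift

variable [TopologicalSpace G] {N : Set G} {Φ : G → E → E}

theorem IsLocalTranslationLift.isLeftMulLift_comp (hΦ : IsLocalTranslationLift p N Φ) {g : G}
    (hg : g ∈ N) {x : E} {l : E → E} (hl : IsLeftMulLift p e x l) :
    IsLeftMulLift p e (Φ g x) (Φ g ∘ l) := by
  refine ⟨continuous_iff_continuousAt.mpr fun y => ?_, fun y => ?_, by rw [comp_apply, hl.map_base]⟩
  · exact (hΦ.continuousAt g hg (l y)).comp (f := fun y => (g, l y))
      (continuous_const.prodMk hl.continuous).continuousAt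
  · rw [comp_apply, hΦ.lift g hg, hΦ.lift g hg, hl.lift, mul_assoc]

theorem IsLocalTranslationLift.exists_isLeftMulLift [ConnectedSpace E]
    (hΦ : IsLocalTranslationLift p N Φ) (he : p e = 1) (x : E) : ∃ l, IsLeftMulLift p e x l := by
  set A := {x | ∃ l, IsLeftMulLift p e x l}
  have hA_open : IsOpen A := isOpen_iff_mem_nhds.mpr fun x ⟨l, hl⟩ => by
    filter_upwards [hΦ.eventually_to x] with x' ⟨hg, hx'⟩
    exact ⟨_, hx' ▸ hΦ.isLeftMulLift_comp hg hl⟩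
  have hA_closed : IsClosed A := isClosed_iff_frequently.mpr fun x hx => by
    obtain ⟨x', ⟨l', hl'⟩, hg, hx⟩ := (hx.and_eventually (hΦ.eventually_from x)).exists
    exact ⟨_, hx ▸ hΦ.isLeftMulLift_comp hg hl'⟩
  have hA : A = univ := IsClopen.eq_univ ⟨hA_closed, hA_open⟩ ⟨e, id, isLeftMulLift_id he⟩
  exact (hA ▸ mem_univ x : x ∈ A)

theorem IsLocalTranslationLift.continuous_uncurry [ContinuousMul G] [ConnectedSpace E]
    (hp : IsCoveringMap p) (hΦ : IsLocalTranslationLift p N Φ) {μ : E → E → E}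
    (hμ : ∀ x, IsLeftMulLift p e x (μ x)) : Continuous (uncurry μ) := by
  refine continuous_iff_continuousAt.mpr fun ⟨x₀, y₀⟩ => ?_
  have hloc : (fun q : E × E => Φ (p q.1 * (p x₀)⁻¹) (μ x₀ q.2)) =ᶠ[𝓝 (x₀, y₀)] uncurry μ := by
    filter_upwards [continuousAt_fst.eventually (hΦ.eventually_to x₀)] with ⟨x, y⟩ ⟨hg, hx⟩
    exact congr_fun ((hx ▸ hΦ.isLeftMulLift_comp hg (hμ x₀)).unique hp (hμ x)) y
  refine ContinuousAt.congr ?_ hloc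
  exact (hΦ.continuousAt _ (hΦ.eventually_to x₀).self_of_nhds.1 (μ x₀ y₀)).comp_of_eq
    (((hp.continuous.comp continuous_fst).mul continuous_const).prodMk
      ((hμ x₀).continuous.comp continuous_snd)).continuousAt rfl

end LeftMulLift

theorem IsTopologicalGroup.of_compactSpace {M : Type*} [TopologicalSpace M] [Group M]
    [ContinuousMul M] [CompactSpace M] [T2Space M] : IsTopologicalGroup M := by
  -- `Mˣ` is compact, so the continuous bijection `Units.val` is a homeomorphism
  let h : Mˣ ≃ₜ M := Units.continuous_val.homeoOfEquivCompactToT2 (f := toUnits.symm.toEquiv)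
  have hinv : (fun x : M => x⁻¹) = h ∘ (·⁻¹) ∘ h.symm := funext fun x => by
    change x⁻¹ = ((toUnits x)⁻¹ : Mˣ)
    simp
  exact { continuous_inv := hinv ▸ h.continuous.comp (continuous_inv.comp h.symm.continuous) }

section GroupStructure

variable {E G : Type*} [TopologicalSpace E] [ConnectedSpace E] [TopologicalSpace G] [Group G]
  {p : E → G} {e : E} {μ : E → E → E}

theorem IsLeftMulLift.apply_eq_comp (hp : IsCoveringMap p) (hμ : ∀ x, IsLeftMulLift p e x (μ x))
    (a b : E) : μ (μ a b) = μ a ∘ μ b :=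
  (hμ _).unique hp ((hμ a).comp (hμ b))

theorem IsLeftMulLift.exists_right_inv (hp : IsCoveringMap p) (hsurj : Surjective p)
    (hfin : (p ⁻¹' {1}).Finite) (he : p e = 1) (hμ : ∀ x, IsLeftMulLift p e x (μ x))
    (hμc : Continuous (uncurry μ)) (x : E) : ∃ y, μ x y = e := by
  have hone : μ e = id := (hμ e).unique hp (isLeftMulLift_id he)
  -- right multiplications by two points of a fibre are lifts of the same map
  have cancel : ∀ z δ δ', p δ = p δ' → μ z δ = μ z δ' → δ = δ' := by
    intro z δ δ' hpδ h
    have hcont : ∀ δ, Continuous fun w => μ w δ := fun δ =>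
      hμc.comp (continuous_id.prodMk continuous_const)
    have := hp.eq_of_comp_eq (hcont δ) (hcont δ')
      (funext fun w => by simp [(hμ w).lift, hpδ]) z h
    simpa [hone] using congr_fun this e
  obtain ⟨y, hy⟩ := hsurj (p x)⁻¹
  have ha : p (μ x y) = 1 := by rw [(hμ x).lift, hy, mul_inv_cancel]
  have := hfin.to_subtype
  let f : p ⁻¹' {1} → p ⁻¹' {1} := fun δ =>
    ⟨μ (μ x y) δ, by rw [mem_preimage, (hμ _).lift, ha, (δ.2 : p δ = 1), one_mul]; rfl⟩
  have hf : Injective f := fun δ δ' h =>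
    Subtype.ext (cancel _ _ _ (δ.2.trans δ'.2.symm) (congrArg Subtype.val h))
  obtain ⟨δ, hδ⟩ := Finite.injective_iff_surjective.mp hf ⟨e, he⟩
  refine ⟨μ y δ, ?_⟩
  rw [← comp_apply (f := μ x), ← apply_eq_comp hp hμ]
  exact congrArg Subtype.val hδ

theorem IsLeftMulLift.exists_group [CompactSpace E] [T2Space E] [T1Space G] (hp : IsCoveringMap p)
    (hsurj : Surjective p) (he : p e = 1) (hμ : ∀ x, IsLeftMulLift p e x (μ x))
    (hμc : Continuous (uncurry μ)) :
    ∃ gr : Group E, gr.one = e ∧ @IsTopologicalGroup E _ gr ∧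
      ∀ x y, p (gr.mul x y) = p x * p y := by
  choose inv hinv using exists_right_inv hp hsurj (hp.finite_preimage_singleton 1) he hμ hμc
  let _ : Mul E := ⟨μ⟩
  let _ : One E := ⟨e⟩
  let _ : Inv E := ⟨inv⟩
  let gr : Group E := .ofRightAxioms (fun a b => congr_fun (apply_eq_comp hp hμ a b))
    (fun x => (hμ x).map_base) hinv
  have : ContinuousMul E := ⟨hμc⟩
  exact ⟨gr, rfl, .of_compactSpace, fun x y => (hμ x).lift y⟩

end GroupStructure

theorem covering_group_theorem_exists_general
    {X G : Type*} [TopologicalSpace G] [Group G] [IsTopologicalGroup G]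
    [CompactSpace G] [T2Space G]
    [TopologicalSpace X] [ConnectedSpace X] [T2Space X]
    (k : ℕ) (p : X → G) (hp : IsCoveringOfDegree k p)
    (e' : X) (he : p e' = 1) :
    ∃ gr : Group X, gr.one = e' ∧ (@IsTopologicalGroup X _ gr) ∧
      ∀ x y : X, p (gr.mul x y) = p x * p y := by
  have := hp.compactSpace
  have hcov : IsCoveringMap p := isLocalHomeomorph_iff_isCoveringMap.mp hp.isLocalHomeomorph
  obtain ⟨N, Φ, hΦ⟩ := exists_isLocalTranslationLift hp.isLocalHomeomorph
  choose μ hμ using hΦ.exists_isLeftMulLift he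
  exact IsLeftMulLift.exists_group hcov hp.2.1 he hμ (hΦ.continuous_uncurry hcov hμ)

/-- Covering group theorem: a finite-sheeted covering of a compact connected Hausdorff
topological group from a connected Hausdorff space carries a unique-identity topological
group structure making the covering map a homomorphism. -/
theorem covering_group_theorem_exists
    {X G : Type*} [TopologicalSpace G] [Group G] [IsTopologicalGroup G]
    [CompactSpace G] [ConnectedSpace G] [T2Space G]
    [TopologicalSpace X] [ConnectedSpace X] [T2Space X]
    (k : ℕ) (hk : 0 < k) (p : X → G) (hp : IsCoveringOfDegree k p)
    (e' : X) (he : p e' = 1) :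
    ∃ gr : Group X, gr.one = e' ∧ (@IsTopologicalGroup X _ gr) ∧
      ∀ x y : X, p (gr.mul x y) = p x * p y :=
  covering_group_theorem_exists_general k p hp e' he
end

section
/- Let G be a compact connected abelian Hausdorff topological group, let k be a positive integer, and let f₁, …, f_k : G → ℂ be continuous functions such that for every g ∈ G the complex polynomial w^k + f₁(g)w^{k−1} + … + f_k(g) has no multiple roots in ℂ (i.e., it has k distinct complex roots). Let X = {(g,z) ∈ G × ℂ : z^k + f₁(g)z^{k−1} + … + f_k(g) = 0} with the subspace topology of G × ℂ. Then the projection p : X → G, (g,z) ↦ g, is a k-sheeted covering map. -/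
open Filter Function Polynomial Set Topology

section Algebra

variable {R : Type*} [CommRing R] {k : ℕ}

def monicEval (c : Fin k → R) (z : R) : R :=
  z ^ k + ∑ i, c i * z ^ (k - 1 - (i : ℕ))

theorem degree_sum_C_mul_X_pow_sub_lt [Nontrivial R] (c : Fin k → R) :
    (∑ i : Fin k, C (c i) * X ^ (k - 1 - (i : ℕ))).degree < (k : WithBot ℕ) :=
  (degree_sum_le _ _).trans_lt <| (Finset.sup_lt_iff (WithBot.bot_lt_coe k)).2
    fun i (_ : i ∈ Finset.univ) => (degree_C_mul_X_pow_le _ _).trans_lt <| Nat.cast_lt.2 (by omega)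

theorem monicEval_eq_prod_sub [IsDomain R] {c s : Fin k → R} (hs : Injective s)
    (hroot : ∀ m, monicEval c (s m) = 0) (z : R) : monicEval c z = ∏ m, (z - s m) := by
  set Q : R[X] := X ^ k + ∑ i : Fin k, C (c i) * X ^ (k - 1 - (i : ℕ))
  have hlower := degree_sum_C_mul_X_pow_sub_lt c
  have hQ : Q.degree = k := by
    rw [degree_add_eq_left_of_degree_lt (by rwa [degree_X_pow]), degree_X_pow]
  have heval : ∀ z, Q.eval z = monicEval c z := fun z => by simp [Q, monicEval, eval_finsetSum]
  have hQnodal : Q = Lagrange.nodal Finset.univ s := by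
    refine eq_of_degree_le_of_eval_index_eq Finset.univ hs.injOn (by simp [hQ]) (by simp [hQ])
      (by rw [(monic_X_pow_add hlower).leadingCoeff, Lagrange.nodal_monic.leadingCoeff]) ?_
    intro m _
    rw [heval, hroot, Lagrange.eval_nodal_at_node (Finset.mem_univ m)]
  rw [← heval, hQnodal, Lagrange.eval_nodal]

end Algebra

theorem exists_equiv_mem_iff_of_pairwise_disjoint {ι α : Type*} [Finite ι] {s : ι → α}
    {U : ι → Set α} (hU : Pairwise (Disjoint on U)) (h : ∀ j, ∃ m, s m ∈ U j) :
    ∃ σ : ι ≃ ι, ∀ m j, s m ∈ U j ↔ σ m = j := by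
  choose τ hτ using h
  have hτinj : Injective τ := fun i j hij => hU.eq (not_disjoint_iff.2 ⟨_, hτ i, hij ▸ hτ j⟩)
  let e := Equiv.ofBijective τ (Finite.injective_iff_bijective.1 hτinj)
  have hτe : ∀ m, s m ∈ U (e.symm m) := fun m => by
    simpa only [e, Equiv.ofBijective_apply_symm_apply] using hτ (e.symm m)
  exact ⟨e.symm, fun m j => ⟨fun hm => hU.eq (not_disjoint_iff.2 ⟨s m, hτe m, hm⟩),
    fun hm => hm ▸ hτe m⟩⟩

theorem Set.BijOn.exists_homeomorph {X Y : Type*} [TopologicalSpace X] [TopologicalSpace Y]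
    {p : X → Y} (hp : Continuous p) (hpo : IsOpenMap p) {V : Set X} {W : Set Y} (hV : IsOpen V)
    (h : BijOn p V W) : ∃ e : V ≃ₜ W, ∀ x : V, p x = e x :=
  ⟨IsHomeomorph.homeomorph _ ⟨hp.restrict h.mapsTo, hpo.mapsToRestrict hV h.mapsTo, h.bijective⟩,
    fun _ => rfl⟩

theorem exists_norm_sub_lt_of_norm_prod_lt {𝕜 ι : Type*} [NormedField 𝕜] [Fintype ι]
    {s : ι → 𝕜} {z : 𝕜} {ε : ℝ} (hε : 0 ≤ ε)
    (h : ‖∏ m, (z - s m)‖ < ε ^ Fintype.card ι) : ∃ m, ‖z - s m‖ < ε := by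
  by_contra! hfar
  refine h.not_ge ?_
  calc ε ^ Fintype.card ι = ∏ _m : ι, ε := by simp
    _ ≤ ∏ m, ‖z - s m‖ := Finset.prod_le_prod (fun _ _ => hε) fun m _ => hfar m
    _ = ‖∏ m, (z - s m)‖ := (norm_prod _ _).symm

section RootLocus

variable {𝕜 G : Type*} [NormedField 𝕜] [TopologicalSpace G] {k : ℕ} {f : Fin k → G → 𝕜}

abbrev RootLocus (f : Fin k → G → 𝕜) : Type _ :=
  {x : G × 𝕜 // monicEval (f · x.1) x.2 = 0}

variable (hf : ∀ i, Continuous (f i))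
  (hsep : ∀ g, ∃ s : Fin k → 𝕜, Injective s ∧ ∀ z, monicEval (f · g) z = 0 ↔ ∃ m, z = s m)
include hf hsep

theorem eventually_exists_root_mem {g₀ : G} {z₀ : 𝕜} (hz₀ : monicEval (f · g₀) z₀ = 0)
    {U : Set 𝕜} (hU : U ∈ 𝓝 z₀) : ∀ᶠ g in 𝓝 g₀, ∃ z ∈ U, monicEval (f · g) z = 0 := by
  obtain ⟨ε, hε, hball⟩ := Metric.mem_nhds_iff.1 hU
  have hcont : Continuous fun g => ‖monicEval (f · g) z₀‖ := by unfold monicEval; fun_prop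
  have hsmall : ∀ᶠ g in 𝓝 g₀, ‖monicEval (f · g) z₀‖ < ε ^ k :=
    hcont.continuousAt.eventually_lt continuousAt_const (by simpa [hz₀] using pow_pos hε k)
  filter_upwards [hsmall] with g hg
  obtain ⟨s, hs, hroot⟩ := hsep g
  have hroot' : ∀ m, monicEval (f · g) (s m) = 0 := fun m => (hroot _).2 ⟨m, rfl⟩
  rw [monicEval_eq_prod_sub hs hroot'] at hg
  obtain ⟨m, hm⟩ := exists_norm_sub_lt_of_norm_prod_lt hε.le (by rwa [Fintype.card_fin])
  exact ⟨s m, hball (mem_ball_iff_norm'.2 hm), hroot' m⟩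

theorem isOpenMap_rootLocus_fst : IsOpenMap fun x : RootLocus f => x.1.1 := by
  intro O hO
  rw [isOpen_iff_mem_nhds]
  rintro _ ⟨⟨⟨g₀, z₀⟩, hx⟩, hxO, rfl⟩
  obtain ⟨O', hO', rfl⟩ := isOpen_induced_iff.1 hO
  obtain ⟨A, hA, U, hU, hAU⟩ := mem_nhds_prod_iff.1 (hO'.mem_nhds hxO)
  filter_upwards [hA, eventually_exists_root_mem hf hsep hx hU] with g hg ⟨z, hz, hroot⟩
  exact ⟨⟨(g, z), hroot⟩, hAU ⟨hg, hz⟩, rfl⟩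

theorem exists_rootLocus_sheets (g₀ : G) :
    ∃ W : Set G, IsOpen W ∧ g₀ ∈ W ∧ ∃ V : Fin k → Set (RootLocus f),
      (∀ j, IsOpen (V j)) ∧ Pairwise (Disjoint on V) ∧
      (⋃ j, V j) = (fun x => x.1.1) ⁻¹' W ∧ ∀ j, BijOn (fun x => x.1.1) (V j) W := by
  obtain ⟨r, hr, hr0⟩ := hsep g₀
  obtain ⟨U, hU, hUd⟩ := (finite_range r).t2_separation
  have hUdisj : Pairwise (Disjoint on fun j => U (r j)) := fun i j hij =>
    hUd (mem_range_self i) (mem_range_self j) (hr.ne hij)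
  obtain ⟨W, hW, hWo, hg₀⟩ := eventually_nhds_iff.1 <| eventually_all.2 fun j =>
    eventually_exists_root_mem hf hsep ((hr0 _).2 ⟨j, rfl⟩) ((hU (r j)).2.mem_nhds (hU (r j)).1)
  have hsheet : ∀ g ∈ W, ∃ (s : Fin k → 𝕜) (σ : Fin k ≃ Fin k),
      (∀ z, monicEval (f · g) z = 0 → ∃ m, z = s m) ∧ ∀ m j, s m ∈ U (r j) ↔ σ m = j := by
    intro g hg
    obtain ⟨s, -, hs⟩ := hsep g
    obtain ⟨σ, hσ⟩ := exists_equiv_mem_iff_of_pairwise_disjoint hUdisj fun j => by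
      obtain ⟨z, hzU, hz⟩ := hW g hg j
      obtain ⟨m, rfl⟩ := (hs z).1 hz
      exact ⟨m, hzU⟩
    exact ⟨s, σ, fun z => (hs z).1, hσ⟩
  refine ⟨W, hWo, hg₀, fun j => {x | x.1.1 ∈ W ∧ x.1.2 ∈ U (r j)}, fun j => ?_, fun i j hij => ?_,
    ?_, fun j => ⟨fun x hx => hx.1, ?_, fun g hg => ?_⟩⟩
  · exact (hWo.prod (hU _).2).preimage continuous_subtype_val
  · exact disjoint_left.2 fun x hi hj => (hUdisj hij).ne_of_mem hi.2 hj.2 rfl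
  · refine Subset.antisymm (iUnion_subset fun j x hx => hx.1) fun x hx => ?_
    obtain ⟨s, σ, hs, hσ⟩ := hsheet _ hx
    obtain ⟨m, hm⟩ := hs _ x.2
    exact mem_iUnion.2 ⟨σ m, hx, hm ▸ (hσ m _).2 rfl⟩
  · rintro ⟨⟨g, z⟩, hz⟩ ⟨hg, hzU⟩ ⟨⟨g', z'⟩, hz'⟩ ⟨-, hz'U⟩ (rfl : g = g')
    obtain ⟨s, σ, hs, hσ⟩ := hsheet g hg
    obtain ⟨m, rfl⟩ := hs z hz
    obtain ⟨m', rfl⟩ := hs z' hz'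
    obtain rfl : m = m' := σ.injective (((hσ m j).1 hzU).trans ((hσ m' j).1 hz'U).symm)
    rfl
  · obtain ⟨z, hzU, hz⟩ := hW g hg j
    exact ⟨⟨(g, z), hz⟩, ⟨hg, hzU⟩, rfl⟩

end RootLocus

theorem separable_polynomial_covering_general
    {G : Type*} [TopologicalSpace G]
    (k : ℕ) (hk : 0 < k) (f : Fin k → G → ℂ) (hf : ∀ i, Continuous (f i))
    (hsep : ∀ g : G, ∃ r : Fin k → ℂ, Function.Injective r ∧
      ∀ z : ℂ, (z ^ k + ∑ i : Fin k, f i g * z ^ (k - 1 - (i : ℕ)) = 0 ↔ ∃ j, z = r j)) :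
    IsCoveringOfDegree k
      (fun x : {x : G × ℂ // x.2 ^ k + ∑ i : Fin k, f i x.1 * x.2 ^ (k - 1 - (i : ℕ)) = 0} =>
        x.1.1) := by
  have hp : Continuous fun x : RootLocus f => x.1.1 := continuous_fst.comp continuous_subtype_val
  refine ⟨hp, fun g => ?_, fun g₀ => ?_⟩
  · obtain ⟨r, -, hr⟩ := hsep g
    exact ⟨⟨(g, r ⟨0, hk⟩), (hr _).2 ⟨_, rfl⟩⟩, rfl⟩
  · obtain ⟨W, hWo, hg₀, V, hVo, hVd, hVW, hbij⟩ := exists_rootLocus_sheets hf hsep g₀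
    exact ⟨W, hWo, hg₀, V, hVo, hVd, hVW, fun j =>
      (hbij j).exists_homeomorph hp (isOpenMap_rootLocus_fst hf hsep) (hVo j)⟩

/-- A separable monic polynomial of degree `k` over `C(G)` (i.e. with continuous
coefficients `f₁, …, f_k` such that for each `g` the polynomial
`w^k + f₁(g)w^(k-1) + ⋯ + f_k(g)` has `k` distinct complex roots) generates a
`k`-sheeted covering map of `G` via projection from its zero set. -/
theorem separable_polynomial_covering
    {G : Type*} [TopologicalSpace G] [CommGroup G] [IsTopologicalGroup G]
    [CompactSpace G] [ConnectedSpace G] [T2Space G]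
    (k : ℕ) (hk : 0 < k) (f : Fin k → G → ℂ) (hf : ∀ i, Continuous (f i))
    (hsep : ∀ g : G, ∃ r : Fin k → ℂ, Function.Injective r ∧
      ∀ z : ℂ, (z ^ k + ∑ i : Fin k, f i g * z ^ (k - 1 - (i : ℕ)) = 0 ↔ ∃ j, z = r j)) :
    IsCoveringOfDegree k
      (fun x : {x : G × ℂ // x.2 ^ k + ∑ i : Fin k, f i x.1 * x.2 ^ (k - 1 - (i : ℕ)) = 0} =>
        x.1.1) :=
  separable_polynomial_covering_general k hk f hf hsep
end

section
/- Let G be a compact connected abelian Hausdorff topological group and let k be a positive integer. Suppose that for all continuous functions f₁, …, f_k : G → ℂ such that for every g ∈ G the complex polynomial w^k + f₁(g)w^{k−1} + … + f_k(g) has no multiple roots in ℂ, there exist continuous functions h₁, …, h_k : G → ℂ with w^k + f₁(g)w^{k−1} + … + f_k(g) = (w − h₁(g))(w − h₂(g))⋯(w − h_k(g)) as polynomials in w for every g ∈ G (i.e., every separable polynomial of degree k over C(G) is totally reducible). Then the character group of G is k!-divisible. -/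
/-- A character of a topological abelian group `G` is a continuous homomorphism from `G`
to the circle group, i.e. a continuous multiplicative map into the unit circle in `ℂ`. -/
def IsCharacter {G : Type*} [TopologicalSpace G] [CommGroup G] (χ : G → ℂ) : Prop :=
  Continuous χ ∧ (∀ g, ‖χ g‖ = 1) ∧ ∀ g h : G, χ (g * h) = χ g * χ h

/-- The character group of `G` is `n`-divisible: every character is an `n`-th power
of some character. -/
def CharGroupDivisibleBy (G : Type*) [TopologicalSpace G] [CommGroup G] (n : ℕ) : Prop :=
  ∀ χ : G → ℂ, IsCharacter χ → ∃ η : G → ℂ, IsCharacter η ∧ ∀ g : G, (η g) ^ n = χ g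

/-!
For `1 ≤ m ≤ k` and a character `χ`, the polynomial `(w ^ m - χ) ∏ (w - s)`, padded to degree `k`
with constant roots `s` off the unit circle, is separable. A continuous root `η` with `η 1 = 1` has
continuous modulus taking finitely many values, so `‖η‖ = 1` on the connected group `G` and
`η ^ m = χ` everywhere. The same connectedness argument applied to `η x η y / η (x y)`, which is an
`m`-th root of unity, shows that `η` is a character. Iterating over `m = 1, …, k` gives
`k!`-divisibility.
-/

open Polynomial

/-- Every separable monic polynomial `w ^ k + f₀ w ^ (k - 1) + ⋯ + f_{k-1}` over `C(G)` splits
into linear factors over `C(G)`; separability at `g` is encoded by an injective enumeration of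
the roots. -/
def SeparablePolysTotallyReducible (G : Type*) [TopologicalSpace G] (k : ℕ) : Prop :=
  ∀ f : Fin k → G → ℂ, (∀ i, Continuous (f i)) →
    (∀ g : G, ∃ r : Fin k → ℂ, Function.Injective r ∧
      ∀ z : ℂ, (z ^ k + ∑ i : Fin k, f i g * z ^ (k - 1 - (i : ℕ)) = 0 ↔ ∃ j, z = r j)) →
    ∃ ρ : Fin k → G → ℂ, (∀ i, Continuous (ρ i)) ∧
      ∀ (g : G) (w : ℂ),
        w ^ k + ∑ i : Fin k, f i g * w ^ (k - 1 - (i : ℕ)) = ∏ i : Fin k, (w - ρ i g)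

theorem Polynomial.Monic.eval_eq_pow_add_sum_coeff {R : Type*} [CommSemiring R] {p : R[X]}
    (hp : p.Monic) {k : ℕ} (hk : p.natDegree = k) (z : R) :
    p.eval z = z ^ k + ∑ i : Fin k, p.coeff (k - 1 - i) * z ^ (k - 1 - i) := by
  have hlead : p.coeff k = 1 := hk ▸ hp.coeff_natDegree
  rw [eval_eq_sum_range, hk, Finset.sum_range_succ, hlead, one_mul, add_comm,
    Fin.sum_univ_eq_sum_range (fun i => p.coeff (k - 1 - i) * z ^ (k - 1 - i)),
    Finset.sum_range_reflect (fun i => p.coeff i * z ^ i) k]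

theorem Polynomial.exists_injective_fin_roots {K : Type*} [Field K] [IsAlgClosed K] {p : K[X]}
    (hp0 : p ≠ 0) (hp : p.roots.Nodup) {k : ℕ} (hk : p.natDegree = k) :
    ∃ r : Fin k → K, Function.Injective r ∧ ∀ z, p.eval z = 0 ↔ ∃ j, z = r j := by
  classical
  have hcard : p.roots.toFinset.card = k := by
    rw [Multiset.toFinset_card_of_nodup hp, ← (IsAlgClosed.splits p).natDegree_eq_card_roots, hk]
  let e := Finset.equivFinOfCardEq hcard
  refine ⟨fun j => e.symm j, Subtype.val_injective.comp e.symm.injective, fun z => ?_⟩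
  rw [← IsRoot.def, ← mem_roots hp0, ← Multiset.mem_toFinset]
  exact ⟨fun hz => ⟨e ⟨z, hz⟩, by simp⟩, fun ⟨j, hj⟩ => hj ▸ (e.symm j).2⟩

theorem norm_eq_one_of_pow_eq {𝕜 : Type*} [NormedDivisionRing 𝕜] {z a : 𝕜} {m : ℕ} (hm : m ≠ 0)
    (ha : ‖a‖ = 1) (h : z ^ m = a) : ‖z‖ = 1 :=
  (pow_eq_one_iff_of_nonneg (norm_nonneg z) hm).mp (by rw [← norm_pow, h, ha])

theorem nodup_roots_X_pow_sub_C_mul_prod {m : ℕ} (hm : m ≠ 0) {a : ℂ} (ha : ‖a‖ = 1)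
    {S : Finset ℂ} (hS : ∀ s ∈ S, ‖s‖ ≠ 1) :
    ((X ^ m - C a) * ∏ s ∈ S, (X - C s)).roots.Nodup := by
  have ha0 : a ≠ 0 := norm_ne_zero_iff.mp (ha ▸ one_ne_zero)
  have hmonic : (X ^ m - C a).Monic := monic_X_pow_sub_C a hm
  have hprod : (∏ s ∈ S, (X - C s)).Monic := monic_prod_of_monic _ _ fun s _ => monic_X_sub_C s
  rw [roots_mul (hmonic.mul hprod).ne_zero, roots_prod_X_sub_C, Multiset.nodup_add]
  refine ⟨nodup_roots (separable_X_pow_sub_C a (Nat.cast_ne_zero.mpr hm) ha0), S.nodup,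
    Multiset.disjoint_left.mpr fun hz hzS => hS _ hzS (norm_eq_one_of_pow_eq hm ha ?_)⟩
  simpa [mem_roots hmonic.ne_zero, sub_eq_zero] using hz

theorem exists_finset_card_eq_forall_norm_ne_one (d : ℕ) :
    ∃ S : Finset ℂ, S.card = d ∧ ∀ s ∈ S, ‖s‖ ≠ 1 := by
  refine ⟨(Finset.Ico 2 (d + 2)).map Nat.castEmbedding, by simp, ?_⟩
  simp only [Finset.mem_map, Finset.mem_Ico, Nat.castEmbedding_apply]
  rintro _ ⟨n, ⟨hn, -⟩, rfl⟩
  rw [Complex.norm_natCast]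
  exact_mod_cast (by omega : n ≠ 1)

theorem PreconnectedSpace.constant_of_mem_finite {X Y : Type*} [TopologicalSpace X]
    [PreconnectedSpace X] [TopologicalSpace Y] [T1Space Y] {f : X → Y} (hf : Continuous f)
    {s : Set Y} (hs : s.Finite) (hfs : ∀ x, f x ∈ s) (x y : X) : f x = f y :=
  isPreconnected_univ.constant_of_mapsTo hs.isDiscrete hf.continuousOn (fun x _ => hfs x)
    trivial trivial

theorem SeparablePolysTotallyReducible.exists_continuous_roots {G : Type*} [TopologicalSpace G]
    {k : ℕ} (h : SeparablePolysTotallyReducible G k) {P : G → ℂ[X]} (hmonic : ∀ g, (P g).Monic)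
    (hdeg : ∀ g, (P g).natDegree = k) (hnodup : ∀ g, (P g).roots.Nodup)
    (hcoeff : ∀ n, Continuous fun g => (P g).coeff n) :
    ∃ ρ : Fin k → G → ℂ, (∀ i, Continuous (ρ i)) ∧ ∀ g w, (P g).eval w = ∏ i, (w - ρ i g) := by
  have heval := fun g => (hmonic g).eval_eq_pow_add_sum_coeff (hdeg g)
  obtain ⟨ρ, hρ, hρP⟩ := h (fun i g => (P g).coeff (k - 1 - i)) (fun i => hcoeff _) fun g => by
    simpa only [← heval g] using exists_injective_fin_roots (hmonic g).ne_zero (hnodup g) (hdeg g)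
  exact ⟨ρ, hρ, fun g w => (heval g w).trans (hρP g w)⟩

section Characters

variable {G : Type*} [TopologicalSpace G] [CommGroup G]

theorem IsCharacter.ne_zero {χ : G → ℂ} (hχ : IsCharacter χ) (g : G) : χ g ≠ 0 :=
  norm_ne_zero_iff.mp (hχ.2.1 g ▸ one_ne_zero)

theorem IsCharacter.map_one {χ : G → ℂ} (hχ : IsCharacter χ) : χ 1 = 1 :=
  (mul_eq_left₀ (hχ.ne_zero 1)).mp (by rw [← hχ.2.2, one_mul])

theorem IsCharacter.of_pow_eq [IsTopologicalGroup G] [ConnectedSpace G] {χ η : G → ℂ}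
    (hχ : IsCharacter χ) {m : ℕ} (hm : m ≠ 0) (hη : Continuous η) (hη1 : η 1 = 1)
    (hpow : ∀ g, η g ^ m = χ g) : IsCharacter η := by
  have hnorm : ∀ g, ‖η g‖ = 1 := fun g => norm_eq_one_of_pow_eq hm (hχ.2.1 g) (hpow g)
  have hne : ∀ g, η g ≠ 0 := fun g => norm_ne_zero_iff.mp (hnorm g ▸ one_ne_zero)
  let c : G × G → ℂ := fun p => η p.1 * η p.2 / η (p.1 * p.2)
  have hc : Continuous c := by fun_prop (disch := exact fun p => hne _)
  have hc_mem : ∀ p, c p ∈ (nthRootsFinset m (1 : ℂ) : Set ℂ) := fun p => by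
    rw [Finset.mem_coe, mem_nthRootsFinset (Nat.pos_of_ne_zero hm), div_pow, mul_pow, hpow, hpow,
      hpow, hχ.2.2, div_self (mul_ne_zero (hχ.ne_zero _) (hχ.ne_zero _))]
  refine ⟨hη, hnorm, fun g g' => ?_⟩
  have hconst := PreconnectedSpace.constant_of_mem_finite hc (Finset.finite_toSet _) hc_mem
    (g, g') (1, 1)
  simp only [c, mul_one, hη1, div_one] at hconst
  exact ((div_eq_one_iff_eq (hne _)).mp hconst).symm

theorem charGroupDivisibleBy_of_le [IsTopologicalGroup G] [ConnectedSpace G] {k m : ℕ}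
    (h : SeparablePolysTotallyReducible G k) (hm : m ≠ 0) (hmk : m ≤ k) :
    CharGroupDivisibleBy G m := by
  intro χ hχ
  obtain ⟨S, hS_card, hS⟩ := exists_finset_card_eq_forall_norm_ne_one (k - m)
  set Q : ℂ[X] := ∏ s ∈ S, (X - C s)
  have hQ : Q.Monic := monic_prod_of_monic _ _ fun s _ => monic_X_sub_C s
  let P : G → ℂ[X] := fun g => (X ^ m - C (χ g)) * Q
  have hP_eval : ∀ g z, (P g).eval z = 0 ↔ z ^ m = χ g ∨ z ∈ S := fun g z => by
    simp [P, Q, eval_prod, Finset.prod_eq_zero_iff, sub_eq_zero]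
  obtain ⟨ρ, hρ, hρP⟩ := h.exists_continuous_roots (P := P)
    (fun g => (monic_X_pow_sub_C _ hm).mul hQ)
    (fun g => by
      rw [natDegree_mul (monic_X_pow_sub_C _ hm).ne_zero hQ.ne_zero, natDegree_X_pow_sub_C,
        natDegree_finsetProd_X_sub_C_eq_card, hS_card]
      omega)
    (fun g => nodup_roots_X_pow_sub_C_mul_prod hm (hχ.2.1 g) hS)
    (fun n => by
      simp only [P, sub_mul, coeff_sub, coeff_C_mul]
      exact continuous_const.sub (hχ.1.mul continuous_const))
  have hroot : ∀ i g, (P g).eval (ρ i g) = 0 := fun i g => by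
    rw [hρP]
    exact Finset.prod_eq_zero (Finset.mem_univ i) (sub_self _)
  obtain ⟨i, hi⟩ : ∃ i, ρ i 1 = 1 := by
    have h1 : (P 1).eval 1 = 0 := (hP_eval 1 1).mpr (Or.inl (by rw [one_pow, hχ.map_one]))
    obtain ⟨i, -, hi⟩ := Finset.prod_eq_zero_iff.mp ((hρP 1 1).symm.trans h1)
    exact ⟨i, (sub_eq_zero.mp hi).symm⟩
  have hnorm_mem : ∀ g, ‖ρ i g‖ ∈ insert 1 (S.image norm : Set ℝ) := fun g => by
    rcases (hP_eval g _).mp (hroot i g) with hpow | hmem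
    · exact Or.inl (norm_eq_one_of_pow_eq hm (hχ.2.1 g) hpow)
    · exact Or.inr (Finset.mem_image_of_mem _ hmem)
  have hnorm : ∀ g, ‖ρ i g‖ = 1 := fun g => by
    rw [PreconnectedSpace.constant_of_mem_finite (hρ i).norm
      ((S.image norm).finite_toSet.insert 1) hnorm_mem g 1, hi, norm_one]
  have hpow : ∀ g, ρ i g ^ m = χ g := fun g =>
    ((hP_eval g _).mp (hroot i g)).resolve_right fun hmem => hS _ hmem (hnorm g)
  exact ⟨ρ i, hχ.of_pow_eq hm (hρ i) hi hpow, hpow⟩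

theorem CharGroupDivisibleBy.mul {a b : ℕ} (ha : CharGroupDivisibleBy G a)
    (hb : CharGroupDivisibleBy G b) : CharGroupDivisibleBy G (a * b) := by
  intro χ hχ
  obtain ⟨ψ, hψ, hψχ⟩ := hb χ hχ
  obtain ⟨η, hη, hηψ⟩ := ha ψ hψ
  exact ⟨η, hη, fun g => by rw [pow_mul, hηψ, hψχ]⟩

theorem charGroupDivisibleBy_factorial {k : ℕ}
    (h : ∀ m, 0 < m → m ≤ k → CharGroupDivisibleBy G m) : CharGroupDivisibleBy G k.factorial := by
  induction k with
  | zero => exact fun χ hχ => ⟨χ, hχ, fun g => pow_one _⟩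
  | succ n ih =>
    rw [Nat.factorial_succ]
    exact (h _ n.succ_pos le_rfl).mul (ih fun m hm hmn => h m hm (hmn.trans n.le_succ))

end Characters

theorem factorial_divisible_of_totally_reducible_general
    {G : Type*} [TopologicalSpace G] [CommGroup G] [IsTopologicalGroup G]
    [ConnectedSpace G]
    (k : ℕ)
    (h : ∀ f : Fin k → G → ℂ, (∀ i, Continuous (f i)) →
      (∀ g : G, ∃ r : Fin k → ℂ, Function.Injective r ∧
        ∀ z : ℂ, (z ^ k + ∑ i : Fin k, f i g * z ^ (k - 1 - (i : ℕ)) = 0 ↔ ∃ j, z = r j)) →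
      ∃ hfun : Fin k → G → ℂ, (∀ i, Continuous (hfun i)) ∧
        ∀ (g : G) (w : ℂ),
          w ^ k + ∑ i : Fin k, f i g * w ^ (k - 1 - (i : ℕ)) = ∏ i : Fin k, (w - hfun i g)) :
    CharGroupDivisibleBy G (Nat.factorial k) :=
  charGroupDivisibleBy_factorial fun _ hm hmk => charGroupDivisibleBy_of_le h hm.ne' hmk

/-- If every separable monic polynomial of degree `k` over `C(G)` is totally reducible,
then the character group of the compact connected abelian Hausdorff group `G` is
`k!`-divisible. -/
theorem factorial_divisible_of_totally_reducible
    {G : Type*} [TopologicalSpace G] [CommGroup G] [IsTopologicalGroup G]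
    [CompactSpace G] [ConnectedSpace G] [T2Space G]
    (k : ℕ) (hk : 0 < k)
    (h : ∀ f : Fin k → G → ℂ, (∀ i, Continuous (f i)) →
      (∀ g : G, ∃ r : Fin k → ℂ, Function.Injective r ∧
        ∀ z : ℂ, (z ^ k + ∑ i : Fin k, f i g * z ^ (k - 1 - (i : ℕ)) = 0 ↔ ∃ j, z = r j)) →
      ∃ hfun : Fin k → G → ℂ, (∀ i, Continuous (hfun i)) ∧
        ∀ (g : G) (w : ℂ),
          w ^ k + ∑ i : Fin k, f i g * w ^ (k - 1 - (i : ℕ)) = ∏ i : Fin k, (w - hfun i g)) :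
    CharGroupDivisibleBy G (Nat.factorial k) :=
  factorial_divisible_of_totally_reducible_general k h
end
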